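/- arXiv:math/0508369 — 3 statements merged into one kernel-verified Lean document; each statement's English description precedes it below -/
import Mathlib

section
/- Let F ⊆ [0,1] be closed with complement F^c = ⋃ᵢ Gᵢ a countable union of disjoint open intervals, and for each i let xᵢ be an endpoint (left or right) of Gᵢ and mᵢ the length of Gᵢ. Then the measure μ = λ restricted to F plus Σᵢ mᵢ δ_{xᵢ} is a quasi-uniform probability measure on [0,1]. -/
open MeasureTheory

/-- A measure `μ` on `ℝ` (thought of as a probability measure on `[0,1]`) is quasi-uniform if
`μ {x ∈ [0,1] : μ[0,x) ≤ x ≤ μ[0,x]} = 1`. -/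
def QuasiUniform (μ : Measure ℝ) : Prop :=
  μ {x : ℝ | x ∈ Set.Icc (0:ℝ) 1 ∧ μ (Set.Ico 0 x) ≤ ENNReal.ofReal x ∧
      ENNReal.ofReal x ≤ μ (Set.Icc 0 x)} = 1

/-!
Split Lebesgue measure on `[0,1]` as `λ|_F + Σᵢ λ|_{Gᵢ}`; then `μ` is obtained by collapsing
each `λ|_{Gᵢ}` to an atom of the same mass at an endpoint of `Gᵢ`. A point `t ∈ F` lies in no
`Gᵢ`, so each `Gᵢ` lies entirely to the left or to the right of `t`: collapsing can only move
mass of `Gᵢ` from `[0,t)` to `{t}`, never across `t`. Hence `μ[0,t) ≤ t ≤ μ[0,t]` for all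
`t ∈ F`, and `μ` is carried by `F` because the chosen endpoints lie in `F`.
-/

open Set

theorem QuasiUniform.of_forall_mem {μ : Measure ℝ} [IsProbabilityMeasure μ] {F : Set ℝ}
    (hFsub : F ⊆ Icc 0 1) (hFc : μ Fᶜ = 0)
    (hF : ∀ t ∈ F, μ (Ico 0 t) ≤ ENNReal.ofReal t ∧ ENNReal.ofReal t ≤ μ (Icc 0 t)) :
    QuasiUniform μ := by
  have hsub : F ⊆
      {t | t ∈ Icc 0 1 ∧ μ (Ico 0 t) ≤ ENNReal.ofReal t ∧ ENNReal.ofReal t ≤ μ (Icc 0 t)} :=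
    fun t ht => ⟨hFsub ht, hF t ht⟩
  have hnull := measure_mono_null (compl_subset_compl.2 hsub) hFc
  rw [QuasiUniform, measure_congr (ae_eq_univ.2 hnull), measure_univ]

section Interval

variable {a b x t : ℝ}

theorem smul_dirac_Ico_le_restrict_Ioo (ha : 0 ≤ a) (hx : x = a ∨ x = b) (ht : t ∉ Ioo a b) :
    (ENNReal.ofReal (b - a) • Measure.dirac x) (Ico 0 t) ≤
      volume.restrict (Ioo a b) (Ico 0 t) := by
  rw [Measure.smul_apply, Measure.dirac_apply, Measure.restrict_apply' measurableSet_Ioo]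
  by_cases hxt : x ∈ Ico 0 t
  · have hbt : b ≤ t := by
      rcases hx with rfl | rfl
      · exact not_lt.1 fun hbt => ht ⟨hxt.2, hbt⟩
      · exact hxt.2.le
    have hIoo : Ico 0 t ∩ Ioo a b = Ioo a b :=
      inter_eq_right.2 fun y hy => ⟨ha.trans hy.1.le, hy.2.trans_le hbt⟩
    simp [indicator_of_mem hxt, hIoo]
  · simp [hxt]

theorem restrict_Ioo_le_smul_dirac_Icc (ha : 0 ≤ a) (hab : a ≤ b) (hx : x = a ∨ x = b)
    (ht : t ∉ Ioo a b) :
    volume.restrict (Ioo a b) (Icc 0 t) ≤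
      (ENNReal.ofReal (b - a) • Measure.dirac x) (Icc 0 t) := by
  rw [Measure.smul_apply, Measure.dirac_apply, Measure.restrict_apply' measurableSet_Ioo]
  by_cases hxt : x ∈ Icc 0 t
  · simpa [indicator_of_mem hxt] using
      measure_mono (μ := volume) (inter_subset_right (s := Icc 0 t) (t := Ioo a b))
  · have hax : a ≤ x := by rcases hx with rfl | rfl; exacts [le_rfl, hab]
    have htx : t < x := not_le.1 fun h => hxt ⟨ha.trans hax, h⟩
    have hta : t ≤ a := by
      rcases hx with rfl | rfl
      · exact htx.le
      · exact not_lt.1 fun hat => ht ⟨hat, htx⟩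
    have hempty : Icc 0 t ∩ Ioo a b = ∅ :=
      eq_empty_of_forall_notMem fun y hy => (hy.1.2.trans hta).not_gt hy.2.1
    simp [hempty]

end Interval

section Decomposition

variable {F : Set ℝ} {ι : Type*} {a b : ι → ℝ}

theorem Ioo_subset_Icc_diff (hcover : Icc (0:ℝ) 1 \ F = ⋃ i, Ioo (a i) (b i)) (i : ι) :
    Ioo (a i) (b i) ⊆ Icc 0 1 \ F :=
  hcover ▸ subset_iUnion (fun i => Ioo (a i) (b i)) i

theorem Icc_subset_Icc_zero_one (hab : ∀ i, a i < b i)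
    (hcover : Icc (0:ℝ) 1 \ F = ⋃ i, Ioo (a i) (b i)) (i : ι) :
    Icc (a i) (b i) ⊆ Icc 0 1 := by
  rw [← closure_Ioo (hab i).ne]
  exact closure_minimal ((Ioo_subset_Icc_diff hcover i).trans sdiff_subset) isClosed_Icc

theorem endpoints_mem (hab : ∀ i, a i < b i)
    (hdisj : Pairwise fun i j => Disjoint (Ioo (a i) (b i)) (Ioo (a j) (b j)))
    (hcover : Icc (0:ℝ) 1 \ F = ⋃ i, Ioo (a i) (b i)) (i : ι) :
    a i ∈ F ∧ b i ∈ F := by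
  -- An endpoint outside `F` would lie in some other `Gⱼ`, which then overlaps `Gᵢ`.
  have mem_of_endpoint : ∀ y, y = a i ∨ y = b i → y ∈ F := by
    intro y hy
    by_contra hyF
    have hyI : y ∈ Icc 0 1 :=
      Icc_subset_Icc_zero_one hab hcover i (by rcases hy with rfl | rfl <;> simp [(hab i).le])
    obtain ⟨j, hj⟩ := mem_iUnion.1 (hcover ▸ ⟨hyI, hyF⟩ : y ∈ ⋃ j, Ioo (a j) (b j))
    have hji : j ≠ i := by rintro rfl; rcases hy with rfl | rfl <;> simp at hj
    have hsep := Ioo_disjoint_Ioo.1 (hdisj hji)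
    rcases hy with rfl | rfl <;> grind [hab i, hab j]
  exact ⟨mem_of_endpoint _ (Or.inl rfl), mem_of_endpoint _ (Or.inr rfl)⟩

theorem restrict_add_sum_restrict_Ioo_apply [Countable ι] (hF : MeasurableSet F)
    (hFsub : F ⊆ Icc 0 1)
    (hdisj : Pairwise fun i j => Disjoint (Ioo (a i) (b i)) (Ioo (a j) (b j)))
    (hcover : Icc (0:ℝ) 1 \ F = ⋃ i, Ioo (a i) (b i)) (s : Set ℝ) :
    volume.restrict F s + (Measure.sum fun i => volume.restrict (Ioo (a i) (b i))) s =
      volume (s ∩ Icc 0 1) := by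
  have hsplit := Measure.restrict_inter_add_sdiff (μ := volume) (Icc 0 1) hF
  rw [inter_eq_right.2 hFsub] at hsplit
  rw [← Measure.add_apply, ← Measure.restrict_iUnion hdisj fun _ => measurableSet_Ioo, ← hcover,
    hsplit, Measure.restrict_apply' measurableSet_Icc]

variable {x : ι → ℝ} {t : ℝ}

theorem sum_smul_dirac_apply_univ :
    (Measure.sum fun i => ENNReal.ofReal (b i - a i) • Measure.dirac (x i)) univ =
      (Measure.sum fun i => volume.restrict (Ioo (a i) (b i))) univ := by
  simp [Measure.sum_apply _ MeasurableSet.univ]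

theorem sum_smul_dirac_Ico_le (ha : ∀ i, 0 ≤ a i) (hx : ∀ i, x i = a i ∨ x i = b i)
    (ht : ∀ i, t ∉ Ioo (a i) (b i)) :
    (Measure.sum fun i => ENNReal.ofReal (b i - a i) • Measure.dirac (x i)) (Ico 0 t) ≤
      (Measure.sum fun i => volume.restrict (Ioo (a i) (b i))) (Ico 0 t) := by
  simp only [Measure.sum_apply _ measurableSet_Ico]
  exact ENNReal.tsum_le_tsum fun i => smul_dirac_Ico_le_restrict_Ioo (ha i) (hx i) (ht i)

theorem sum_restrict_Ioo_Icc_le (ha : ∀ i, 0 ≤ a i) (hab : ∀ i, a i < b i)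
    (hx : ∀ i, x i = a i ∨ x i = b i) (ht : ∀ i, t ∉ Ioo (a i) (b i)) :
    (Measure.sum fun i => volume.restrict (Ioo (a i) (b i))) (Icc 0 t) ≤
      (Measure.sum fun i => ENNReal.ofReal (b i - a i) • Measure.dirac (x i)) (Icc 0 t) := by
  simp only [Measure.sum_apply _ measurableSet_Icc]
  exact ENNReal.tsum_le_tsum fun i =>
    restrict_Ioo_le_smul_dirac_Icc (ha i) (hab i).le (hx i) (ht i)

end Decomposition

/-- Let `F ⊆ [0,1]` be closed, with `[0,1] \ F` a countable disjoint union of open intervals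
`Gᵢ = (aᵢ, bᵢ)`.  For each `i` let `xᵢ` be one of the two endpoints of `Gᵢ` and `mᵢ = bᵢ - aᵢ`
its length.  Then `λ|_F + Σᵢ mᵢ δ_{xᵢ}` is a quasi-uniform probability measure. -/
theorem restrict_add_atoms_quasiUniform
    (F : Set ℝ) (hF : IsClosed F) (hFsub : F ⊆ Set.Icc 0 1)
    (ι : Type) [Countable ι] (a b x : ι → ℝ)
    (hab : ∀ i, a i < b i)
    (hdisj : Pairwise fun i j => Disjoint (Set.Ioo (a i) (b i)) (Set.Ioo (a j) (b j)))
    (hcover : Set.Icc (0:ℝ) 1 \ F = ⋃ i, Set.Ioo (a i) (b i))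
    (hx : ∀ i, x i = a i ∨ x i = b i) :
    IsProbabilityMeasure
        (volume.restrict F +
          Measure.sum fun i => ENNReal.ofReal (b i - a i) • Measure.dirac (x i)) ∧
      QuasiUniform
        (volume.restrict F +
          Measure.sum fun i => ENNReal.ofReal (b i - a i) • Measure.dirac (x i)) := by
  have ha : ∀ i, 0 ≤ a i := fun i =>
    (Icc_subset_Icc_zero_one hab hcover i (left_mem_Icc.2 (hab i).le)).1
  have hxF : ∀ i, x i ∈ F := fun i => (hx i).elim
    (· ▸ (endpoints_mem hab hdisj hcover i).1) (· ▸ (endpoints_mem hab hdisj hcover i).2)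
  set ν := Measure.sum fun i => ENNReal.ofReal (b i - a i) • Measure.dirac (x i)
  set ρ := Measure.sum fun i => volume.restrict (Ioo (a i) (b i))
  have hvol : ∀ s, volume.restrict F s + ρ s = volume (s ∩ Icc 0 1) :=
    restrict_add_sum_restrict_Ioo_apply hF.measurableSet hFsub hdisj hcover
  have hprob : IsProbabilityMeasure (volume.restrict F + ν) :=
    ⟨by rw [Measure.add_apply, sum_smul_dirac_apply_univ, hvol]; simp⟩
  refine ⟨hprob, QuasiUniform.of_forall_mem hFsub ?_ fun t htF => ?_⟩
  · simp [ν, hxF, hF.measurableSet.compl]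
  have ht : ∀ i, t ∉ Ioo (a i) (b i) := fun i h => (Ioo_subset_Icc_diff hcover i h).2 htF
  have ht1 : Icc 0 t ⊆ Icc 0 1 := Icc_subset_Icc_right (hFsub htF).2
  rw [Measure.add_apply, Measure.add_apply]
  constructor
  · calc volume.restrict F (Ico 0 t) + ν (Ico 0 t)
        ≤ volume.restrict F (Ico 0 t) + ρ (Ico 0 t) :=
          add_le_add le_rfl (sum_smul_dirac_Ico_le ha hx ht)
      _ = ENNReal.ofReal t := by
        rw [hvol, inter_eq_left.2 (Ico_subset_Icc_self.trans ht1), Real.volume_Ico, sub_zero]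
  · calc ENNReal.ofReal t = volume.restrict F (Icc 0 t) + ρ (Icc 0 t) := by
          rw [hvol, inter_eq_left.2 ht1, Real.volume_Icc, sub_zero]
      _ ≤ volume.restrict F (Icc 0 t) + ν (Icc 0 t) :=
          add_le_add le_rfl (sum_restrict_Ioo_Icc_le ha hab hx ht)
end

section
/- Every quasi-uniform probability measure μ on [0,1] decomposes uniquely as μ = λ restricted to a closed set F plus a sum of point masses mᵢ δ_{xᵢ}, where the Gᵢ are the connected components of F^c, mᵢ is the length of Gᵢ, and xᵢ is one of the two endpoints of Gᵢ. -/
/-!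
The decomposing set is forced: it is `S = {t ∈ [0,1] : μ(-∞,t) ≤ t ≤ μ(-∞,t]}`, which is closed
because `t ↦ μ(-∞,t)` is lower and `t ↦ μ(-∞,t]` upper semicontinuous, and which carries all of
`μ` by quasi-uniformity. So `μ` vanishes on every gap `(a,b)` of `S`, and `μ(-∞,a]` is `a` or
`b`: a value `c` strictly in between would itself lie in `S`. Putting the mass `b - a` at `b` in
the first case and at `a` in the second gives a measure with the distribution function of `μ`,
because for `t ∈ S` the Lebesgue measure of `S ∩ [0,t]` plus the lengths of the gaps left of `t`
is `t`. Conversely, the same computation shows that for any decomposition over a closed set `F`,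
`F` is exactly the set `S` of the decomposed measure.
-/

open MeasureTheory

/-- `μ` decomposes over the closed set `F`: the complement `[0,1] \ F` is a countable disjoint
union of open intervals `(aᵢ, bᵢ)` (its connected components), `xᵢ` is one of the two endpoints
of the `i`-th interval, and `μ = λ|_F + Σᵢ (bᵢ - aᵢ) δ_{xᵢ}`. -/
def IsQuasiUniformDecomposition (μ : Measure ℝ) (F : Set ℝ) : Prop :=
  IsClosed F ∧ F ⊆ Set.Icc 0 1 ∧
    ∃ (ι : Type) (_ : Countable ι) (a b x : ι → ℝ),
      (∀ i, a i < b i) ∧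
      (Pairwise fun i j => Disjoint (Set.Ioo (a i) (b i)) (Set.Ioo (a j) (b j))) ∧
      Set.Icc (0:ℝ) 1 \ F = (⋃ i, Set.Ioo (a i) (b i)) ∧
      (∀ i, x i = a i ∨ x i = b i) ∧
      μ = volume.restrict F +
            Measure.sum fun i => ENNReal.ofReal (b i - a i) • Measure.dirac (x i)

open Set
open scoped ENNReal

section DistributionFunction

variable (μ : Measure ℝ)

theorem exists_lt_measure_Iic_of_lt_measure_Iio {t : ℝ} {y : ℝ≥0∞} (h : y < μ (Iio t)) :
    ∃ s < t, y < μ (Iic s) := by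
  obtain ⟨u, hu_mono, hu_lt, hu_lim⟩ := exists_seq_strictMono_tendsto t
  have hIio : Iio t = ⋃ n, Iic (u n) := by
    refine Subset.antisymm (fun s hs => ?_) (iUnion_subset fun n => Iic_subset_Iio.2 (hu_lt n))
    obtain ⟨n, hn⟩ := (hu_lim.eventually (lt_mem_nhds hs)).exists
    exact mem_iUnion.2 ⟨n, hn.le⟩
  rw [hIio, Monotone.measure_iUnion fun m n hmn => Iic_subset_Iic.2 (hu_mono.monotone hmn),
    lt_iSup_iff] at h
  obtain ⟨n, hn⟩ := h
  exact ⟨u n, hu_lt n, hn⟩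

theorem exists_measure_Iic_lt_of_measure_Iic_lt [IsFiniteMeasure μ] {t : ℝ} {y : ℝ≥0∞}
    (h : μ (Iic t) < y) : ∃ s > t, μ (Iic s) < y := by
  obtain ⟨u, hu_anti, hu_gt, hu_lim⟩ := exists_seq_strictAnti_tendsto t
  have hIic : Iic t = ⋂ n, Iic (u n) := by
    refine Subset.antisymm (subset_iInter fun n => Iic_subset_Iic.2 (hu_gt n).le) fun s hs => ?_
    exact ge_of_tendsto' hu_lim fun n => mem_iInter.1 hs n
  rw [hIic, Antitone.measure_iInter (fun m n hmn => Iic_subset_Iic.2 (hu_anti.antitone hmn))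
    (fun _ => measurableSet_Iic.nullMeasurableSet) ⟨0, measure_ne_top _ _⟩, iInf_lt_iff] at h
  obtain ⟨n, hn⟩ := h
  exact ⟨u n, hu_gt n, hn⟩

theorem lowerSemicontinuous_measure_Iio : LowerSemicontinuous fun t => μ (Iio t) := by
  intro t y hy
  obtain ⟨s, hst, hs⟩ := exists_lt_measure_Iic_of_lt_measure_Iio μ hy
  filter_upwards [lt_mem_nhds hst] with r hr
  exact hs.trans_le (measure_mono (Iic_subset_Iio.2 hr))

theorem upperSemicontinuous_measure_Iic [IsFiniteMeasure μ] :
    UpperSemicontinuous fun t => μ (Iic t) := by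
  intro t y hy
  obtain ⟨s, hst, hs⟩ := exists_measure_Iic_lt_of_measure_Iic_lt μ hy
  filter_upwards [gt_mem_nhds hst] with r hr
  exact (measure_mono (Iic_subset_Iic.2 hr.le)).trans_lt hs

variable {μ}

theorem measure_Iic_eq_of_measure_Ioo_eq_zero {a b t : ℝ} (h : μ (Ioo a b) = 0) (hat : a ≤ t)
    (htb : t < b) : μ (Iic t) = μ (Iic a) := by
  refine le_antisymm ?_ (measure_mono (Iic_subset_Iic.2 hat))
  calc μ (Iic t) ≤ μ (Iic a ∪ Ioo a b) := measure_mono fun s hs => by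
        rcases le_or_gt s a with hsa | hsa
        exacts [Or.inl hsa, Or.inr ⟨hsa, (mem_Iic.1 hs).trans_lt htb⟩]
    _ ≤ μ (Iic a) := by simpa [h] using measure_union_le (μ := μ) (Iic a) (Ioo a b)

theorem measure_Iio_eq_of_measure_Ioo_eq_zero {a b t : ℝ} (h : μ (Ioo a b) = 0) (hat : a < t)
    (htb : t ≤ b) : μ (Iio t) = μ (Iic a) := by
  refine le_antisymm ?_ (measure_mono (Iic_subset_Iio.2 hat))
  calc μ (Iio t) ≤ μ (Iic a ∪ Ioo a b) := measure_mono fun s hs => by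
        rcases le_or_gt s a with hsa | hsa
        exacts [Or.inl hsa, Or.inr ⟨hsa, (mem_Iio.1 hs).trans_le htb⟩]
    _ ≤ μ (Iic a) := by simpa [h] using measure_union_le (μ := μ) (Iic a) (Ioo a b)

theorem ext_of_measure_Iic_of_measure_compl_Icc {ν : Measure ℝ} [IsFiniteMeasure μ] {c d : ℝ}
    (hcd : c ≤ d) (hμ : μ (Icc c d)ᶜ = 0) (hν : ν (Icc c d)ᶜ = 0)
    (h : ∀ t ∈ Icc c d, μ (Iic t) = ν (Iic t)) : μ = ν := by
  refine Measure.ext_of_Iic μ ν fun t => ?_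
  rcases lt_or_ge t c with htc | hct
  · have hempty : Iic t ∩ Icc c d = ∅ :=
      eq_empty_of_forall_notMem fun s hs => (hs.1.trans_lt htc).not_ge hs.2.1
    rw [← measure_inter_conull hμ, ← measure_inter_conull hν, hempty, measure_empty,
      measure_empty]
  rcases le_or_gt t d with htd | hdt
  · exact h t ⟨hct, htd⟩
  · have hIcc : ∀ s ≥ d, Iic s ∩ Icc c d = Icc c d := fun s hs =>
      inter_eq_right.2 fun r hr => hr.2.trans hs
    rw [← measure_inter_conull hμ, ← measure_inter_conull hν, hIcc t hdt.le, ← hIcc d le_rfl,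
      measure_inter_conull hμ, measure_inter_conull hν, h d ⟨hcd, le_rfl⟩]

end DistributionFunction

def quasiUniformSet (μ : Measure ℝ) : Set ℝ :=
  {t | t ∈ Icc 0 1 ∧ μ (Iio t) ≤ ENNReal.ofReal t ∧ ENNReal.ofReal t ≤ μ (Iic t)}

section QuasiUniformSet

variable {μ : Measure ℝ}

theorem isClosed_quasiUniformSet [IsFiniteMeasure μ] : IsClosed (quasiUniformSet μ) := by
  have hgraph : Continuous fun t : ℝ => (t, ENNReal.ofReal t) :=
    continuous_id.prodMk ENNReal.continuous_ofReal
  refine isClosed_Icc.inter (IsClosed.inter ?_ ?_)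
  · exact (lowerSemicontinuous_measure_Iio μ).isClosed_epigraph.preimage hgraph
  · exact (upperSemicontinuous_measure_Iic μ).IsClosed_hypograph.preimage hgraph

theorem notMem_quasiUniformSet_of_lt {t s : ℝ} (hts : t < s)
    (hs : ENNReal.ofReal s < μ (Iic t)) : s ∉ quasiUniformSet μ := fun hmem =>
  (hmem.2.1.trans_lt hs).not_ge (measure_mono (Iic_subset_Iio.2 hts))

/-- If `c := μ (Iic a)` were strictly between `a` and `b`, then `μ` would have no mass on
`(a, c]`, which puts `c` itself in the quasi-uniform set. -/
theorem measure_Iic_eq_or_of_disjoint_Ioo {a b : ℝ} (ha : a ∈ quasiUniformSet μ)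
    (hb : b ∈ quasiUniformSet μ) (hab : a < b) (hnull : μ (Ioo a b) = 0)
    (hgap : Disjoint (Ioo a b) (quasiUniformSet μ)) :
    μ (Iic a) = ENNReal.ofReal a ∨ μ (Iic a) = ENNReal.ofReal b := by
  have hle : μ (Iic a) ≤ ENNReal.ofReal b := (measure_mono (Iic_subset_Iio.2 hab)).trans hb.2.1
  by_contra! hne
  set c := (μ (Iic a)).toReal
  have hc : ENNReal.ofReal c = μ (Iic a) := ENNReal.ofReal_toReal (ne_top_of_le_ne_top
    ENNReal.ofReal_ne_top hle)
  have hac : a < c :=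
    (ENNReal.ofReal_lt_ofReal_iff'.1 (hc ▸ lt_of_le_of_ne ha.2.2 hne.1.symm)).1
  have hcb : c < b := (ENNReal.ofReal_lt_ofReal_iff'.1 (hc ▸ lt_of_le_of_ne hle hne.2)).1
  refine hgap.notMem_of_mem_left ⟨hac, hcb⟩ ⟨⟨ha.1.1.trans hac.le, hcb.le.trans hb.1.2⟩, ?_, ?_⟩
  · rw [measure_Iio_eq_of_measure_Ioo_eq_zero hnull hac hcb.le, hc]
  · rw [measure_Iic_eq_of_measure_Ioo_eq_zero hnull hac.le hcb, hc]

variable (hsupp : μ (Icc 0 1)ᶜ = 0)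
include hsupp

theorem measure_Iio_zero_eq_zero : μ (Iio 0) = 0 :=
  measure_mono_null (fun _ ht (hmem : _ ∈ Icc (0 : ℝ) 1) => (mem_Iio.1 ht).not_ge hmem.1) hsupp

theorem zero_mem_quasiUniformSet : 0 ∈ quasiUniformSet μ :=
  ⟨⟨le_rfl, zero_le_one⟩, by simp [measure_Iio_zero_eq_zero hsupp], by simp⟩

theorem one_mem_quasiUniformSet [IsProbabilityMeasure μ] : 1 ∈ quasiUniformSet μ := by
  have hIcc : μ (Icc 0 1) = 1 := (prob_compl_eq_zero_iff measurableSet_Icc).1 hsupp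
  refine ⟨⟨zero_le_one, le_rfl⟩, by simpa using prob_le_one, ?_⟩
  simpa [hIcc] using measure_mono (μ := μ) (Icc_subset_Iic_self (a := (0 : ℝ)) (b := 1))

theorem measure_quasiUniformSet_eq_one (hQU : QuasiUniform μ) :
    μ (quasiUniformSet μ) = 1 := by
  have hnonneg : μ (Ici 0)ᶜ = 0 := by rw [compl_Ici]; exact measure_Iio_zero_eq_zero hsupp
  have hIco : ∀ x : ℝ, μ (Ico 0 x) = μ (Iio x) := fun x => by
    rw [← Ici_inter_Iio, inter_comm, measure_inter_conull hnonneg]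
  have hIcc : ∀ x : ℝ, μ (Icc 0 x) = μ (Iic x) := fun x => by
    rw [← Ici_inter_Iic, inter_comm, measure_inter_conull hnonneg]
  simp only [QuasiUniform, hIco, hIcc] at hQU
  exact hQU

end QuasiUniformSet

/-- `a` and `b` enumerate the gaps of `F` in `[0,1]`: the connected components of `[0,1] \ F`
are the open intervals `Ioo (a i) (b i)`. -/
structure IsGapPartition {ι : Type*} (F : Set ℝ) (a b : ι → ℝ) : Prop where
  subset_Icc : F ⊆ Icc 0 1
  lt : ∀ i, a i < b i
  pairwise_disjoint : Pairwise fun i j => Disjoint (Ioo (a i) (b i)) (Ioo (a j) (b j))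
  diff_eq : Icc 0 1 \ F = ⋃ i, Ioo (a i) (b i)

namespace IsGapPartition

variable {ι : Type*} {F : Set ℝ} {a b : ι → ℝ} (h : IsGapPartition F a b)
include h

theorem countable : Countable ι :=
  h.pairwise_disjoint.countable_of_isOpen_disjoint (fun _ => isOpen_Ioo)
    fun i => nonempty_Ioo.2 (h.lt i)

theorem Ioo_subset (i : ι) : Ioo (a i) (b i) ⊆ Icc 0 1 \ F :=
  h.diff_eq ▸ subset_iUnion (fun i => Ioo (a i) (b i)) i

theorem disjoint_Ioo (i : ι) : Disjoint (Ioo (a i) (b i)) F :=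
  disjoint_left.2 fun _ hs => (h.Ioo_subset i hs).2

theorem notMem_Ioo {t : ℝ} (ht : t ∈ F) (i : ι) : t ∉ Ioo (a i) (b i) :=
  fun hi => (h.disjoint_Ioo i).notMem_of_mem_left hi ht

theorem exists_mem_Ioo {t : ℝ} (ht : t ∈ Icc 0 1) (htF : t ∉ F) : ∃ i, t ∈ Ioo (a i) (b i) :=
  mem_iUnion.1 (h.diff_eq ▸ ⟨ht, htF⟩)

theorem le_left_of_lt_right {t : ℝ} (ht : t ∈ F) {i : ι} (hti : t < b i) : t ≤ a i :=
  not_lt.1 fun hit => h.notMem_Ioo ht i ⟨hit, hti⟩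

theorem right_le_of_left_lt {t : ℝ} (ht : t ∈ F) {i : ι} (hit : a i < t) : b i ≤ t :=
  not_lt.1 fun hti => h.notMem_Ioo ht i ⟨hit, hti⟩

theorem Icc_subset (i : ι) : Icc (a i) (b i) ⊆ Icc 0 1 := by
  rw [← closure_Ioo (h.lt i).ne]
  exact closure_minimal (fun _ hs => (h.Ioo_subset i hs).1) isClosed_Icc

theorem left_mem (i : ι) : a i ∈ F := by
  by_contra haF
  obtain ⟨j, hj⟩ := h.exists_mem_Ioo (h.Icc_subset i ⟨le_rfl, (h.lt i).le⟩) haF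
  have hij : i ≠ j := fun hij => (hij ▸ hj).1.false
  exact (Ioo_disjoint_Ioo.1 (h.pairwise_disjoint hij)).not_gt
    (max_lt (lt_min (h.lt i) hj.2) (lt_min (hj.1.trans (h.lt i)) (hj.1.trans hj.2)))

theorem right_mem (i : ι) : b i ∈ F := by
  by_contra hbF
  obtain ⟨j, hj⟩ := h.exists_mem_Ioo (h.Icc_subset i ⟨(h.lt i).le, le_rfl⟩) hbF
  have hij : i ≠ j := fun hij => (hij ▸ hj).2.false
  exact (Ioo_disjoint_Ioo.1 (h.pairwise_disjoint hij)).not_gt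
    (max_lt (lt_min (h.lt i) ((h.lt i).trans hj.2)) (lt_min hj.1 (hj.1.trans hj.2)))

theorem mem_of_eq_or_eq {i : ι} {y : ℝ} (hy : y = a i ∨ y = b i) : y ∈ F := by
  rcases hy with rfl | rfl
  exacts [h.left_mem i, h.right_mem i]

theorem eq_of_left_eq {i j : ι} (hij : a i = a j) : i = j := by
  by_contra hne
  have hij' : a j < b i := hij ▸ h.lt i
  exact (Ioo_disjoint_Ioo.1 (h.pairwise_disjoint hne)).not_gt
    (max_lt (lt_min (h.lt i) (hij ▸ h.lt j)) (lt_min hij' (h.lt j)))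

theorem measure_Iic_eq_of_forall_mem {μ ν : Measure ℝ} (hμ : ∀ i, μ (Ioo (a i) (b i)) = 0)
    (hν : ∀ i, ν (Ioo (a i) (b i)) = 0) (hF : ∀ t ∈ F, μ (Iic t) = ν (Iic t)) {t : ℝ}
    (ht : t ∈ Icc 0 1) : μ (Iic t) = ν (Iic t) := by
  by_cases htF : t ∈ F
  · exact hF t htF
  obtain ⟨j, hj⟩ := h.exists_mem_Ioo ht htF
  rw [measure_Iic_eq_of_measure_Ioo_eq_zero (hμ j) hj.1.le hj.2,
    measure_Iic_eq_of_measure_Ioo_eq_zero (hν j) hj.1.le hj.2, hF _ (h.left_mem j)]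

end IsGapPartition

def gaps (F : Set ℝ) : Set (ℝ × ℝ) :=
  {p | p.1 < p.2 ∧ p.1 ∈ F ∧ p.2 ∈ F ∧ Disjoint (Ioo p.1 p.2) F}

theorem IsClosed.exists_mem_gaps {F : Set ℝ} (hF : IsClosed F) {t : ℝ} (htF : t ∉ F)
    {l r : ℝ} (hl : l ∈ F) (hlt : l ≤ t) (hr : r ∈ F) (htr : t ≤ r) :
    ∃ p ∈ gaps F, t ∈ Ioo p.1 p.2 := by
  have hbelow : (F ∩ Iic t).Nonempty := ⟨l, hl, hlt⟩
  have habove : (F ∩ Ici t).Nonempty := ⟨r, hr, htr⟩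
  have hsup : sSup (F ∩ Iic t) ∈ F ∩ Iic t :=
    (hF.inter isClosed_Iic).csSup_mem hbelow ⟨t, fun _ hs => hs.2⟩
  have hinf : sInf (F ∩ Ici t) ∈ F ∩ Ici t :=
    (hF.inter isClosed_Ici).csInf_mem habove ⟨t, fun _ hs => hs.2⟩
  have hsup_lt : sSup (F ∩ Iic t) < t := lt_of_le_of_ne hsup.2 fun he => htF (he ▸ hsup.1)
  have hlt_inf : t < sInf (F ∩ Ici t) := lt_of_le_of_ne hinf.2 fun he => htF (he ▸ hinf.1)
  refine ⟨(sSup (F ∩ Iic t), sInf (F ∩ Ici t)), ⟨hsup_lt.trans hlt_inf, hsup.1, hinf.1, ?_⟩,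
    hsup_lt, hlt_inf⟩
  refine disjoint_left.2 fun s hs hsF => ?_
  rcases le_total s t with hst | hts
  · exact hs.1.not_ge (le_csSup ⟨t, fun _ hs => hs.2⟩ ⟨hsF, hst⟩)
  · exact hs.2.not_ge (csInf_le ⟨t, fun _ hs => hs.2⟩ ⟨hsF, hts⟩)

theorem IsClosed.isGapPartition_gaps {F : Set ℝ} (hF : IsClosed F) (hF01 : F ⊆ Icc 0 1)
    (h0 : 0 ∈ F) (h1 : 1 ∈ F) :
    IsGapPartition F (fun p : gaps F => p.1.1) (fun p => p.1.2) where
  subset_Icc := hF01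
  lt p := p.2.1
  pairwise_disjoint p q hpq := by
    obtain ⟨⟨a, b⟩, hab, ha, hb, hp⟩ := p
    obtain ⟨⟨c, d⟩, hcd, hc, hd, hq⟩ := q
    refine Ioo_disjoint_Ioo.2 (not_lt.1 fun hlt => hpq ?_)
    simp only [max_lt_iff, lt_min_iff] at hlt
    obtain ⟨⟨-, hcb⟩, had, -⟩ := hlt
    have hac : a = c := le_antisymm (not_lt.1 fun hca => hq.notMem_of_mem_left ⟨hca, had⟩ ha)
      (not_lt.1 fun hac => hp.notMem_of_mem_left ⟨hac, hcb⟩ hc)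
    have hbd : b = d := le_antisymm (not_lt.1 fun hdb => hp.notMem_of_mem_left ⟨had, hdb⟩ hd)
      (not_lt.1 fun hbd => hq.notMem_of_mem_left ⟨hcb, hbd⟩ hb)
    simp [hac, hbd]
  diff_eq := by
    refine Subset.antisymm (fun t ht => ?_) (iUnion_subset fun p s hs => ?_)
    · obtain ⟨p, hp, htp⟩ := hF.exists_mem_gaps ht.2 h0 ht.1.1 h1 ht.1.2
      exact mem_iUnion.2 ⟨⟨p, hp⟩, htp⟩
    · exact ⟨⟨(hF01 p.2.2.1).1.trans hs.1.le, hs.2.le.trans (hF01 p.2.2.2.1).2⟩,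
        p.2.2.2.2.notMem_of_mem_left hs⟩

noncomputable def gapMeasure {ι : Type*} (F : Set ℝ) (a b x : ι → ℝ) : Measure ℝ :=
  volume.restrict F + Measure.sum fun i => ENNReal.ofReal (b i - a i) • Measure.dirac (x i)

section GapMeasure

variable {ι : Type*} {F : Set ℝ} {a b x : ι → ℝ}

open scoped Classical in
theorem gapMeasure_apply {s : Set ℝ} (hs : MeasurableSet s) :
    gapMeasure F a b x s =
      volume (s ∩ F) + ∑' i, if x i ∈ s then ENNReal.ofReal (b i - a i) else 0 := by
  rw [gapMeasure, Measure.add_apply, Measure.restrict_apply hs, Measure.sum_apply _ hs]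
  congr 1
  refine tsum_congr fun i => ?_
  rw [Measure.smul_apply, Measure.dirac_apply' _ hs, smul_eq_mul]
  by_cases hxs : x i ∈ s <;> simp [hxs]

variable (h : IsGapPartition F a b)
include h

theorem IsGapPartition.volume_Iic_inter_add_tsum {t : ℝ} (ht : t ∈ F) :
    volume (Iic t ∩ F) + ∑' i, (if b i ≤ t then ENNReal.ofReal (b i - a i) else 0) =
      ENNReal.ofReal t := by
  have := h.countable
  set U := ⋃ i, Ioo (a i) (b i)
  have hIcc_diff : Icc 0 t \ U = Iic t ∩ F := by
    ext s
    simp only [U, ← h.diff_eq, Set.mem_sdiff, mem_Iic, mem_inter_iff]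
    have := h.subset_Icc ht
    have := @h.subset_Icc s
    grind
  have hIcc_inter (i : ι) : volume (Icc 0 t ∩ Ioo (a i) (b i)) =
      if b i ≤ t then ENNReal.ofReal (b i - a i) else 0 := by
    split_ifs with hbt
    · have hsub : Ioo (a i) (b i) ⊆ Icc 0 t := fun s hs =>
        ⟨(h.Icc_subset i (Ioo_subset_Icc_self hs)).1, hs.2.le.trans hbt⟩
      rw [inter_eq_right.2 hsub, Real.volume_Ioo]
    · have hta := h.le_left_of_lt_right ht (not_le.1 hbt)
      have hdisj : Disjoint (Icc 0 t) (Ioo (a i) (b i)) :=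
        disjoint_left.2 fun s hs hs' => (hs.2.trans hta).not_gt hs'.1
      rw [hdisj.inter_eq, measure_empty]
  calc volume (Iic t ∩ F) + ∑' i, (if b i ≤ t then ENNReal.ofReal (b i - a i) else 0)
      = volume (Icc 0 t \ U) + volume (Icc 0 t ∩ U) := by
        rw [hIcc_diff, inter_iUnion, measure_iUnion (fun i j hij => (h.pairwise_disjoint hij).mono
          inter_subset_right inter_subset_right) fun i => measurableSet_Icc.inter measurableSet_Ioo]
        simp only [hIcc_inter]
    _ = volume (Icc 0 t) := by
        rw [add_comm, measure_inter_add_sdiff _ (isOpen_iUnion fun i => isOpen_Ioo).measurableSet]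
    _ = ENNReal.ofReal t := by simp

theorem gapMeasure_Ioo_eq_zero (hx : ∀ i, x i = a i ∨ x i = b i) (j : ι) :
    gapMeasure F a b x (Ioo (a j) (b j)) = 0 := by
  rw [gapMeasure_apply measurableSet_Ioo, (h.disjoint_Ioo j).inter_eq, measure_empty, zero_add]
  exact ENNReal.tsum_eq_zero.2 fun i => if_neg (h.notMem_Ioo (h.mem_of_eq_or_eq (hx i)) j)

theorem gapMeasure_Iio_le (hx : ∀ i, x i = a i ∨ x i = b i) {t : ℝ} (ht : t ∈ F) :
    gapMeasure F a b x (Iio t) ≤ ENNReal.ofReal t := by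
  rw [gapMeasure_apply measurableSet_Iio, ← h.volume_Iic_inter_add_tsum ht]
  refine add_le_add (measure_mono (inter_subset_inter_left _ Iio_subset_Iic_self))
    (ENNReal.tsum_le_tsum fun i => ?_)
  have hxb : x i < t → b i ≤ t := by
    rcases hx i with hxi | hxi <;> rw [hxi]
    exacts [h.right_le_of_left_lt ht, le_of_lt]
  simp only [mem_Iio]
  split_ifs <;> simp_all

/-- The atom at `x i` lies in `Iic t` exactly when the whole gap does, or when `t` is its left
endpoint and carries the atom. -/
theorem gapMeasure_Iic (hx : ∀ i, x i = a i ∨ x i = b i) {t : ℝ} (ht : t ∈ F) :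
    gapMeasure F a b x (Iic t) =
      ENNReal.ofReal t + ∑' i, if a i = t ∧ x i = t then ENNReal.ofReal (b i - a i) else 0 := by
  rw [gapMeasure_apply measurableSet_Iic, ← h.volume_Iic_inter_add_tsum ht, add_assoc,
    ← ENNReal.tsum_add]
  congr 1
  refine tsum_congr fun i => ?_
  have hab := h.lt i
  have hta : t < b i → t ≤ a i := h.le_left_of_lt_right ht
  simp only [mem_Iic]
  rcases hx i with hxi | hxi <;> rw [hxi] <;> split_ifs <;> first | (exfalso; grind) | simp

theorem gapMeasure_Iic_of_forall_ne (hx : ∀ i, x i = a i ∨ x i = b i) {t : ℝ} (ht : t ∈ F)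
    (hne : ∀ i, a i ≠ t) : gapMeasure F a b x (Iic t) = ENNReal.ofReal t := by
  rw [gapMeasure_Iic h hx ht, ENNReal.tsum_eq_zero.2 fun i => if_neg fun hi => hne i hi.1,
    add_zero]

theorem gapMeasure_Iic_left (hx : ∀ i, x i = a i ∨ x i = b i) (j : ι) :
    gapMeasure F a b x (Iic (a j)) = ENNReal.ofReal (if x j = a j then b j else a j) := by
  rw [gapMeasure_Iic h hx (h.left_mem j), tsum_eq_single j fun i hij =>
    if_neg fun hi => hij (h.eq_of_left_eq hi.1)]
  have h0 : 0 ≤ a j := (h.subset_Icc (h.left_mem j)).1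
  by_cases hxj : x j = a j
  · rw [if_pos ⟨rfl, hxj⟩, if_pos hxj, ← ENNReal.ofReal_add h0 (sub_nonneg.2 (h.lt j).le),
      add_sub_cancel]
  · rw [if_neg fun hi => hxj hi.2, if_neg hxj, add_zero]

theorem gapMeasure_compl_Icc (hx : ∀ i, x i = a i ∨ x i = b i) :
    gapMeasure F a b x (Icc 0 1)ᶜ = 0 := by
  rw [gapMeasure_apply measurableSet_Icc.compl,
    (disjoint_compl_left.mono_right h.subset_Icc).inter_eq, measure_empty, zero_add]
  exact ENNReal.tsum_eq_zero.2 fun i =>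
    if_neg (not_not.2 (h.subset_Icc (h.mem_of_eq_or_eq (hx i))))

theorem quasiUniformSet_gapMeasure (hx : ∀ i, x i = a i ∨ x i = b i) :
    quasiUniformSet (gapMeasure F a b x) = F := by
  ext t
  refine ⟨fun ⟨ht01, hlo, hhi⟩ => ?_, fun ht => ⟨h.subset_Icc ht, gapMeasure_Iio_le h hx ht, ?_⟩⟩
  · by_contra htF
    obtain ⟨j, hj⟩ := h.exists_mem_Ioo ht01 htF
    have hnull := gapMeasure_Ioo_eq_zero h hx j
    rw [measure_Iio_eq_of_measure_Ioo_eq_zero hnull hj.1 hj.2.le] at hlo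
    rw [measure_Iic_eq_of_measure_Ioo_eq_zero hnull hj.1.le hj.2] at hhi
    have heq := le_antisymm hlo hhi
    rw [gapMeasure_Iic_left h hx j] at heq
    have hne (y : ℝ) (hy : y = a j ∨ y = b j) : ENNReal.ofReal y ≠ ENNReal.ofReal t := fun hyt => by
      have := (ENNReal.ofReal_eq_ofReal_iff (h.subset_Icc (h.mem_of_eq_or_eq hy)).1 ht01.1).1 hyt
      rcases hy with rfl | rfl <;> linarith [hj.1, hj.2]
    exact hne _ (by split_ifs <;> simp) heq
  · rw [gapMeasure_Iic h hx ht]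
    exact le_self_add

end GapMeasure

section Existence

variable {μ : Measure ℝ} [IsProbabilityMeasure μ] {ι : Type*} {a b : ι → ℝ}

/-- Every `s ∈ (t, μ (Iic t))` has `s < μ (Iio s)`, so it lies in a gap, and that gap starts
at `t`. -/
theorem IsGapPartition.exists_left_eq_of_lt_measure_Iic
    (h : IsGapPartition (quasiUniformSet μ) a b) {t : ℝ} (ht : t ∈ quasiUniformSet μ)
    (hlt : ENNReal.ofReal t < μ (Iic t)) : ∃ j, a j = t := by
  obtain ⟨s, -, hts, hsμ⟩ := ENNReal.lt_iff_exists_real_btwn.1 hlt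
  have hts : t < s := (ENNReal.ofReal_lt_ofReal_iff'.1 hts).1
  have hs1 : s < 1 := ENNReal.ofReal_lt_one.1 (hsμ.trans_le prob_le_one)
  obtain ⟨j, hj⟩ := h.exists_mem_Ioo ⟨ht.1.1.trans hts.le, hs1.le⟩
    (notMem_quasiUniformSet_of_lt hts hsμ)
  refine ⟨j, le_antisymm (not_lt.1 fun htj => ?_) (h.le_left_of_lt_right ht (hts.trans hj.2))⟩
  exact notMem_quasiUniformSet_of_lt htj ((ENNReal.ofReal_le_ofReal hj.1.le).trans_lt hsμ)
    (h.left_mem j)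

theorem exists_eq_gapMeasure (hsupp : μ (Icc 0 1)ᶜ = 0) (hQU : QuasiUniform μ)
    (h : IsGapPartition (quasiUniformSet μ) a b) :
    ∃ x : ι → ℝ, (∀ i, x i = a i ∨ x i = b i) ∧ μ = gapMeasure (quasiUniformSet μ) a b x := by
  set x := fun i => if μ (Iic (a i)) = ENNReal.ofReal (a i) then b i else a i
  have hx (i : ι) : x i = a i ∨ x i = b i := by simp only [x]; split_ifs <;> simp
  have hμ_gap (i : ι) : μ (Ioo (a i) (b i)) = 0 :=
    measure_mono_null (fun _ hs => (h.Ioo_subset i hs).2)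
      ((prob_compl_eq_zero_iff isClosed_quasiUniformSet.measurableSet).2
        (measure_quasiUniformSet_eq_one hsupp hQU))
  refine ⟨x, hx, ext_of_measure_Iic_of_measure_compl_Icc zero_le_one hsupp
    (gapMeasure_compl_Icc h hx) fun s hs => ?_⟩
  refine h.measure_Iic_eq_of_forall_mem hμ_gap (gapMeasure_Ioo_eq_zero h hx) (fun t ht => ?_) hs
  by_cases hleft : ∃ j, a j = t
  · obtain ⟨j, rfl⟩ := hleft
    rw [gapMeasure_Iic_left h hx j]
    by_cases hG : μ (Iic (a j)) = ENNReal.ofReal (a j)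
    · rw [if_neg (by simp [x, hG, (h.lt j).ne']), hG]
    · rw [if_pos (by simp [x, hG])]
      exact (measure_Iic_eq_or_of_disjoint_Ioo (h.left_mem j) (h.right_mem j) (h.lt j)
        (hμ_gap j) (h.disjoint_Ioo j)).resolve_left hG
  · rw [not_exists] at hleft
    rw [gapMeasure_Iic_of_forall_ne h hx ht hleft]
    by_contra hne
    obtain ⟨j, hj⟩ := h.exists_left_eq_of_lt_measure_Iic ht (lt_of_le_of_ne ht.2.2 (Ne.symm hne))
    exact hleft j hj

end Existence

/-- Every quasi-uniform probability measure on `[0,1]` decomposes, uniquely (up to the labelling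
of the intervals), as Lebesgue measure restricted to a closed set `F` plus point masses `mᵢ δ_{xᵢ}`
where `mᵢ` is the length of the `i`-th component of `Fᶜ` and `xᵢ` one of its endpoints. -/
theorem quasiUniform_decomposition (μ : Measure ℝ) (hμ : IsProbabilityMeasure μ)
    (hsupp : μ (Set.Icc (0:ℝ) 1)ᶜ = 0) (hQU : QuasiUniform μ) :
    ∃! F : Set ℝ, IsQuasiUniformDecomposition μ F := by
  have hclosed : IsClosed (quasiUniformSet μ) := isClosed_quasiUniformSet
  have hgaps := hclosed.isGapPartition_gaps (fun _ ht => ht.1) (zero_mem_quasiUniformSet hsupp)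
    (one_mem_quasiUniformSet hsupp)
  obtain ⟨x, hx, hμx⟩ := exists_eq_gapMeasure hsupp hQU hgaps
  refine ⟨quasiUniformSet μ, ⟨hclosed, hgaps.subset_Icc, gaps (quasiUniformSet μ),
    hgaps.countable, _, _, x, hgaps.lt, hgaps.pairwise_disjoint, hgaps.diff_eq, hx, hμx⟩, ?_⟩
  rintro F ⟨-, hF, ι, -, a, b, y, hab, hdisj, hdiff, hy, rfl⟩
  exact (quasiUniformSet_gapMeasure ⟨hF, hab, hdisj, hdiff⟩ hy).symm
end

section
/- Let ν be a probability measure on [0,1]² with both marginals uniform, and let ((U_k, V_k))_{k ≥ 1} be i.i.d. with law ν. Let ⊲ and ⊲′ be the orders on ℕ induced by (U_k) and (V_k) respectively, and let ν̂(⊲, ·) be a regular conditional probability for ⊲′ given ⊲. Then for every bijection r : ℕ → ℕ and every measurable set A of orders, ν̂(r̂(⊲), r̂(A)) = ν̂(⊲, A) for λ-almost all ⊲. -/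
open MeasureTheory ProbabilityTheory

/-- The relabelling map on orders (as `Bool`-valued relations on the labels) induced by a
bijection `r` of the labels: `k ⊲̂ k'` iff `r k ⊲ r k'`. -/
def relabel (r : ℕ ≃ ℕ) (R : ℕ → ℕ → Bool) : ℕ → ℕ → Bool :=
  fun k k' => R (r k) (r k')

/-!
Since `((U_k, V_k))_k` is i.i.d., its law is invariant under relabelling the indices, hence the
joint law `μ ⊗ₘ κ` of `(⊲, ⊲′)` is invariant under relabelling both orders. Pushing `μ ⊗ₘ κ`
forward by `e × f` for measurable bijections `e`, `f` gives `μ.map e ⊗ₘ (x ↦ (κ (e⁻¹ x)).map f)`,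
so invariance and the a.e. uniqueness of disintegrations yield `κ (e x) = (κ x).map f` for
`μ`-almost every `x`.
-/

namespace MeasureTheory.Measure

variable {α β γ : Type*} [MeasurableSpace α] [MeasurableSpace β] [MeasurableSpace γ]

lemma map_prodMap_compProd_comap (μ : Measure α) [SFinite μ] (κ : Kernel γ β)
    [IsSFiniteKernel κ] {g : α → γ} (hg : Measurable g) :
    (μ ⊗ₘ κ.comap g hg).map (Prod.map g id) = μ.map g ⊗ₘ κ := by
  ext s hs
  rw [map_apply (hg.prodMap measurable_id) hs, compProd_apply (hg.prodMap measurable_id hs),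
    compProd_apply hs, lintegral_map (Kernel.measurable_kernel_prodMk_left hs) hg]
  rfl

lemma map_prodMap_compProd (μ : Measure α) [SFinite μ] (κ : Kernel α β) [IsSFiniteKernel κ]
    (e : α ≃ᵐ α) (f : β ≃ᵐ β) :
    (μ ⊗ₘ κ).map (Prod.map e f) = μ.map e ⊗ₘ (κ.map f).comap e.symm e.symm.measurable := by
  have hκ : ((κ.map f).comap e.symm e.symm.measurable).comap e e.measurable = κ.map f := by
    ext x : 1; simp [Kernel.comap_apply]
  rw [← map_prodMap_compProd_comap _ _ e.measurable, hκ, compProd_map f.measurable,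
    map_map (e.measurable.prodMap measurable_id) (measurable_id.prodMap f.measurable)]
  rfl

end MeasureTheory.Measure

namespace ProbabilityTheory.Kernel

variable {α β : Type*} [MeasurableSpace α] [MeasurableSpace β]
  [MeasurableSpace.CountableOrCountablyGenerated α β]

theorem ae_apply_eq_map_of_map_prodMap_compProd_eq {μ : Measure α} [IsFiniteMeasure μ]
    {κ : Kernel α β} [IsMarkovKernel κ] (e : α ≃ᵐ α) (f : β ≃ᵐ β)
    (h : (μ ⊗ₘ κ).map (Prod.map e f) = μ ⊗ₘ κ) :
    ∀ᵐ x ∂μ, κ (e x) = (κ x).map f := by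
  have hμ : μ.map e = μ := calc
    μ.map e = ((μ ⊗ₘ κ).map Prod.fst).map e := by rw [← Measure.fst, Measure.fst_compProd]
    _ = ((μ ⊗ₘ κ).map (Prod.map e f)).map Prod.fst := by
      rw [Measure.map_map e.measurable measurable_fst,
        Measure.map_map measurable_fst (e.measurable.prodMap f.measurable)]
      rfl
    _ = μ := by rw [h, ← Measure.fst, Measure.fst_compProd]
  rw [Measure.map_prodMap_compProd, hμ] at h
  have hae := ae_eq_of_compProd_eq h
  rw [Filter.EventuallyEq, ← hμ, e.measurableEmbedding.ae_map_iff] at hae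
  filter_upwards [hae] with x hx
  rw [← hx, Kernel.comap_apply, Kernel.map_apply _ f.measurable, e.symm_apply_apply]

end ProbabilityTheory.Kernel

lemma ProbabilityTheory.iIndepFun.map_precomp_eq {Ω ι 𝓧 : Type*} [MeasurableSpace Ω]
    [MeasurableSpace 𝓧] {P : Measure Ω} {X : ι → Ω → 𝓧} {ν : Measure 𝓧}
    (hX : ∀ i, Measurable (X i)) (h : iIndepFun X P) (hlaw : ∀ i, P.map (X i) = ν)
    {g : ι → ι} (hg : g.Injective) :
    P.map (fun ω i => X (g i) ω) = P.map (fun ω i => X i ω) := by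
  rw [(h.precomp hg).map_fun_eq_infinitePi_map fun i => hX (g i),
    h.map_fun_eq_infinitePi_map hX]
  congr! 2 with i
  rw [hlaw, hlaw]

noncomputable def ltOrder (x : ℕ → ℝ) : ℕ → ℕ → Bool :=
  fun k k' => decide (x k < x k')

lemma measurable_ltOrder : Measurable ltOrder :=
  measurable_pi_lambda _ fun k => measurable_pi_lambda _ fun k' => measurable_to_bool <| by
    simp only [ltOrder, Set.preimage, Set.mem_singleton_iff, decide_eq_true_eq]
    exact measurableSet_lt (measurable_pi_apply k) (measurable_pi_apply k')

lemma measurable_relabel (r : ℕ ≃ ℕ) : Measurable (relabel r) := by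
  unfold relabel; fun_prop

def relabelEquiv (r : ℕ ≃ ℕ) : (ℕ → ℕ → Bool) ≃ᵐ (ℕ → ℕ → Bool) where
  toFun := relabel r
  invFun := relabel r.symm
  left_inv R := by funext k k'; simp [relabel]
  right_inv R := by funext k k'; simp [relabel]
  measurable_toFun := measurable_relabel r
  measurable_invFun := measurable_relabel r.symm

noncomputable def orderPair (x : ℕ → ℝ × ℝ) : (ℕ → ℕ → Bool) × (ℕ → ℕ → Bool) :=
  (ltOrder (Prod.fst ∘ x), ltOrder (Prod.snd ∘ x))

lemma measurable_orderPair : Measurable orderPair :=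
  (measurable_ltOrder.comp (by fun_prop)).prodMk (measurable_ltOrder.comp (by fun_prop))

lemma map_prodMap_relabel_map_orderPair {Ω : Type*} [MeasurableSpace Ω] {P : Measure Ω}
    {X : ℕ → Ω → ℝ × ℝ} {ν : Measure (ℝ × ℝ)} (hX : ∀ k, Measurable (X k))
    (hindep : iIndepFun X P) (hlaw : ∀ k, P.map (X k) = ν) (r : ℕ ≃ ℕ) :
    (P.map fun ω => orderPair fun k => X k ω).map (Prod.map (relabel r) (relabel r))
      = P.map fun ω => orderPair fun k => X k ω := by
  have hseq : Measurable fun ω k => X k ω := measurable_pi_lambda _ hX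
  have hseq_r : Measurable fun ω k => X (r k) ω := measurable_pi_lambda _ fun k => hX (r k)
  have hpair : Measurable fun ω => orderPair fun k => X k ω := measurable_orderPair.comp hseq
  calc (P.map fun ω => orderPair fun k => X k ω).map (Prod.map (relabel r) (relabel r))
      = (P.map fun ω k => X (r k) ω).map orderPair := by
        rw [Measure.map_map ((measurable_relabel r).prodMap (measurable_relabel r))
          hpair, Measure.map_map measurable_orderPair hseq_r]
        rfl
    _ = P.map fun ω => orderPair fun k => X k ω := by
        rw [hindep.map_precomp_eq hX hlaw r.injective, Measure.map_map measurable_orderPair hseq]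
        rfl

theorem rcp_commutes_with_relabelling_general
    {Ω : Type*} [MeasurableSpace Ω] (P : Measure Ω) [IsProbabilityMeasure P]
    (ν : Measure (ℝ × ℝ))
    (UV : ℕ → Ω → ℝ × ℝ) (hmeas : ∀ k, Measurable (UV k))
    (hindep : iIndepFun UV P)
    (hlaw : ∀ k, P.map (UV k) = ν)
    (T T' : Ω → ℕ → ℕ → Bool)
    (hT : ∀ ω k k', T ω k k' = decide ((UV k ω).1 < (UV k' ω).1))
    (hT' : ∀ ω k k', T' ω k k' = decide ((UV k ω).2 < (UV k' ω).2))
    (κ : Kernel (ℕ → ℕ → Bool) (ℕ → ℕ → Bool)) [IsMarkovKernel κ]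
    (hκ : P.map (fun ω => (T ω, T' ω)) = (P.map T) ⊗ₘ κ) :
    ∀ (r : ℕ ≃ ℕ) (A : Set (ℕ → ℕ → Bool)), MeasurableSet A →
      ∀ᵐ R ∂(P.map T), κ (relabel r R) (relabel r '' A) = κ R A := by
  intro r A _
  have hpair : (fun ω => (T ω, T' ω)) = fun ω => orderPair fun k => UV k ω := by
    funext ω
    ext k k' <;> simp [orderPair, ltOrder, hT, hT']
  have hinv := map_prodMap_relabel_map_orderPair hmeas hindep hlaw r
  rw [← hpair, hκ] at hinv
  filter_upwards [Kernel.ae_apply_eq_map_of_map_prodMap_compProd_eq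
    (relabelEquiv r) (relabelEquiv r) hinv] with R hR
  change κ (relabelEquiv r R) (relabelEquiv r '' A) = κ R A
  rw [hR, MeasurableEquiv.map_apply, MeasurableEquiv.preimage_image]

/-- Let `ν` be a probability measure on `[0,1]²` with uniform marginals and `((U_k, V_k))_k`
i.i.d. with law `ν`.  Let `⊲`, `⊲′` be the orders induced by `(U_k)` and `(V_k)` and let
`ν̂(⊲, ·)` be a regular conditional probability for `⊲′` given `⊲`.  Then for every bijection
`r` of the labels and every measurable set `A` of orders,
`ν̂(r̂(⊲), r̂(A)) = ν̂(⊲, A)` for `λ`-almost all `⊲` (`λ` being the law of `⊲`). -/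
theorem rcp_commutes_with_relabelling
    {Ω : Type*} [MeasurableSpace Ω] (P : Measure Ω) [IsProbabilityMeasure P]
    (ν : Measure (ℝ × ℝ)) (hν : IsProbabilityMeasure ν)
    (hfst : ν.map Prod.fst = volume.restrict (Set.Icc (0:ℝ) 1))
    (hsnd : ν.map Prod.snd = volume.restrict (Set.Icc (0:ℝ) 1))
    (UV : ℕ → Ω → ℝ × ℝ) (hmeas : ∀ k, Measurable (UV k))
    (hindep : iIndepFun UV P)
    (hlaw : ∀ k, P.map (UV k) = ν)
    (T T' : Ω → ℕ → ℕ → Bool)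
    (hT : ∀ ω k k', T ω k k' = decide ((UV k ω).1 < (UV k' ω).1))
    (hT' : ∀ ω k k', T' ω k k' = decide ((UV k ω).2 < (UV k' ω).2))
    (κ : Kernel (ℕ → ℕ → Bool) (ℕ → ℕ → Bool)) [IsMarkovKernel κ]
    (hκ : P.map (fun ω => (T ω, T' ω)) = (P.map T) ⊗ₘ κ) :
    ∀ (r : ℕ ≃ ℕ) (A : Set (ℕ → ℕ → Bool)), MeasurableSet A →
      ∀ᵐ R ∂(P.map T), κ (relabel r R) (relabel r '' A) = κ R A :=
  rcp_commutes_with_relabelling_general P ν UV hmeas hindep hlaw T T' hT hT' κ hκ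
end
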